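/- arXiv:2311.01208 — 2 statements merged into one kernel-verified Lean document; each statement's English description precedes it below -/
import Mathlib

section
/- Let f : [0,1] → ℝ. (1) If the symmetrization 𝓕 of f is concave on [0,1] and f(0) ≥ f(1/2), then L_n(f) is decreasing in n and R_n(f) is increasing in n. (2) If 𝓕 is concave on [0,1] and f(1) ≥ f(1/2), then L_n(f) is increasing in n and R_n(f) is decreasing in n. (3) If 𝓕 is convex on [0,1] and f(1) ≤ f(1/2), then L_n(f) is decreasing in n and R_n(f) is increasing in n. (4) If 𝓕 is convex on [0,1] and f(0) ≤ f(1/2), then L_n(f) is increasing in n and R_n(f) is decreasing in n. -/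
/-!
Write `S_n(g) = ∑_{k=0}^{n} g(k/n)`. Then `n L_n(f) = S_n(f) - f(1)`,
`n R_n(f) = S_n(f) - f(0)`, and `S_n(f) = S_n(𝓕)` because the grid is symmetric about `1/2`, so
each monotonicity claim is a bound on `n S_{n+1} - (n+1) S_n`. For concave `𝓕` (where
`𝓕(0) = 𝓕(1)` and `𝓕(1/2) = f(1/2)`) the two bounds needed are
  `(n+1) S_n ≤ n S_{n+1} + 𝓕(1/2)` and `n S_{n+1} + 𝓕(0) + 𝓕(1) ≤ (n+1) S_n + 𝓕(1/2)`.
For concave `g`, writing each point of one grid as a convex combination of its two neighbours on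
the other grid shows that `S_n(g)/(n+1)` increases and `(S_n(g) - g(0) - g(1))/(n-1)` decreases;
Jensen's inequality for a family of points symmetric about `1/2` supplies the remaining `𝓕(1/2)`
term. The convex case is the concave one applied to `-f`.
-/

open Finset

/-- Left Riemann sum of `f` over the uniform partition of `[0,1]` into `n` parts. -/
noncomputable def riemannL (f : ℝ → ℝ) (n : ℕ) : ℝ :=
  (1 / (n : ℝ)) * ∑ k ∈ Finset.range n, f ((k : ℝ) / (n : ℝ))

/-- Right Riemann sum of `f` over the uniform partition of `[0,1]` into `n` parts. -/
noncomputable def riemannR (f : ℝ → ℝ) (n : ℕ) : ℝ :=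
  (1 / (n : ℝ)) * ∑ k ∈ Finset.Icc 1 n, f ((k : ℝ) / (n : ℝ))

/-- Symmetrization of `f` with respect to `x = 1/2`. -/
noncomputable def symmetrization (f : ℝ → ℝ) : ℝ → ℝ :=
  fun x => (f x + f (1 - x)) / 2

noncomputable def gridSum (g : ℝ → ℝ) (n : ℕ) : ℝ :=
  ∑ k ∈ range (n + 1), g (k / n)

lemma gridSum_succ_eq (g : ℝ → ℝ) (n : ℕ) :
    gridSum g (n + 1) = g 0 + ∑ k ∈ range n, g ((k + 1) / (n + 1)) + g 1 := by
  rw [gridSum, sum_range_succ, sum_range_succ']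
  push_cast
  rw [div_self (by positivity), zero_div]
  ring

lemma natCast_div_mem_Icc {k n : ℕ} (h : k ≤ n) : (k : ℝ) / n ∈ Set.Icc (0 : ℝ) 1 :=
  ⟨by positivity, div_le_one_of_le₀ (by exact_mod_cast h) (by positivity)⟩

lemma natCast_sub_div_eq_one_sub {k n : ℕ} (hk : k ≤ n) (hn : 0 < n) :
    ((n - k : ℕ) : ℝ) / n = 1 - k / n := by
  have : (n : ℝ) ≠ 0 := Nat.cast_ne_zero.2 hn.ne'
  rw [Nat.cast_sub hk]
  field_simp

lemma sum_range_comp_one_sub (φ : ℝ → ℝ) {p : ℕ → ℝ} {m : ℕ}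
    (hp : ∀ k < m, p (m - 1 - k) = 1 - p k) :
    ∑ k ∈ range m, φ (1 - p k) = ∑ k ∈ range m, φ (p k) := by
  rw [← sum_range_reflect (fun k => φ (p k)) m]
  exact sum_congr rfl fun k hk => by rw [hp k (mem_range.1 hk)]

lemma sum_range_succ_mul_add_sub_mul (a : ℕ → ℝ) (n : ℕ) :
    ∑ k ∈ range n, ((k + 1) * a k + (n - k) * a (k + 1)) =
      (n + 2) * ∑ k ∈ range (n + 1), a k - (n + 1) * (a 0 + a n) := by
  have hleft : ∑ k ∈ range n, (k + 1) * a k =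
      ∑ k ∈ range (n + 1), ((k : ℝ) + 1) * a k - (n + 1) * a n := by
    rw [sum_range_succ]; ring
  have hright : ∑ k ∈ range n, ((n : ℝ) - k) * a (k + 1) =
      ∑ k ∈ range (n + 1), ((n : ℝ) + 1 - k) * a k - (n + 1) * a 0 := by
    rw [sum_range_succ']; push_cast; ring_nf
  have hcomb : ∑ k ∈ range (n + 1), ((k : ℝ) + 1) * a k +
        ∑ k ∈ range (n + 1), ((n : ℝ) + 1 - k) * a k =
      (n + 2) * ∑ k ∈ range (n + 1), a k := by
    rw [← sum_add_distrib, mul_sum]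
    exact sum_congr rfl fun k _ => by ring
  rw [sum_add_distrib, hleft, hright]
  linarith

lemma sum_range_sub_mul_add_mul_succ (b : ℕ → ℝ) (n : ℕ) :
    ∑ k ∈ range (n + 1), ((n - k) * b k + k * b (k + 1)) =
      (n - 1) * ∑ k ∈ range (n + 2), b k + b 0 + b (n + 1) := by
  have hleft : ∑ k ∈ range (n + 1), ((n : ℝ) - k) * b k =
      ∑ k ∈ range (n + 2), ((n : ℝ) - k) * b k + b (n + 1) := by
    rw [sum_range_succ _ (n + 1)]; push_cast; ring
  have hright : ∑ k ∈ range (n + 1), (k : ℝ) * b (k + 1) =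
      ∑ k ∈ range (n + 2), ((k : ℝ) - 1) * b k + b 0 := by
    rw [sum_range_succ' _ (n + 1)]; push_cast; ring_nf
  have hcomb : ∑ k ∈ range (n + 2), ((n : ℝ) - k) * b k +
      ∑ k ∈ range (n + 2), ((k : ℝ) - 1) * b k = (n - 1) * ∑ k ∈ range (n + 2), b k := by
    rw [← sum_add_distrib, mul_sum]
    exact sum_congr rfl fun k _ => by ring
  rw [sum_add_distrib, hleft, hright]
  linarith

section Concave

variable {g : ℝ → ℝ}

lemma ConcaveOn.mul_add_mul_le {s : Set ℝ} (hg : ConcaveOn ℝ s g) {x y a b : ℝ}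
    (hx : x ∈ s) (hy : y ∈ s) (ha : 0 ≤ a) (hb : 0 ≤ b) (hab : 0 < a + b) :
    a * g x + b * g y ≤ (a + b) * g ((a * x + b * y) / (a + b)) := by
  have h := hg.2 hx hy (div_nonneg ha hab.le) (div_nonneg hb hab.le) (by field_simp)
  simp only [smul_eq_mul] at h
  rw [show a / (a + b) * x + b / (a + b) * y = (a * x + b * y) / (a + b) by field_simp] at h
  calc a * g x + b * g y = (a + b) * (a / (a + b) * g x + b / (a + b) * g y) := by field_simp
    _ ≤ _ := mul_le_mul_of_nonneg_left h hab.le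

lemma ConcaveOn.add_comp_one_sub_le (hg : ConcaveOn ℝ (Set.Icc 0 1) g) {x : ℝ}
    (hx : x ∈ Set.Icc (0 : ℝ) 1) : g x + g (1 - x) ≤ 2 * g (1 / 2) := by
  have h1x : 1 - x ∈ Set.Icc (0 : ℝ) 1 := ⟨by linarith [hx.2], by linarith [hx.1]⟩
  have h := hg.mul_add_mul_le hx h1x zero_le_one zero_le_one (by norm_num)
  norm_num at h
  linarith

lemma ConcaveOn.sum_range_le_mul_apply_half (hg : ConcaveOn ℝ (Set.Icc 0 1) g) {p : ℕ → ℝ}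
    {m : ℕ} (hmem : ∀ k < m, p k ∈ Set.Icc (0 : ℝ) 1)
    (hp : ∀ k < m, p (m - 1 - k) = 1 - p k) :
    ∑ k ∈ range m, g (p k) ≤ m * g (1 / 2) := by
  have hpair : ∑ k ∈ range m, (g (p k) + g (1 - p k)) ≤ ∑ k ∈ range m, 2 * g (1 / 2) :=
    sum_le_sum fun k hk => hg.add_comp_one_sub_le (hmem k (mem_range.1 hk))
  rw [sum_add_distrib, sum_range_comp_one_sub g hp, sum_const, card_range,
    nsmul_eq_mul] at hpair
  linarith

lemma ConcaveOn.gridSum_le_mul_apply_half (hg : ConcaveOn ℝ (Set.Icc 0 1) g) {n : ℕ}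
    (hn : 0 < n) : gridSum g n ≤ (n + 1) * g (1 / 2) := by
  have h := hg.sum_range_le_mul_apply_half (p := fun k : ℕ => (k : ℝ) / n) (m := n + 1)
    (fun k hk => natCast_div_mem_Icc (Nat.lt_succ_iff.1 hk))
    (fun k hk => by
      simp only [Nat.add_sub_cancel]
      exact natCast_sub_div_eq_one_sub (Nat.lt_succ_iff.1 hk) hn)
  push_cast at h
  exact h

lemma ConcaveOn.sum_range_succ_div_succ_le (hg : ConcaveOn ℝ (Set.Icc 0 1) g) (n : ℕ) :
    ∑ k ∈ range n, g ((k + 1) / (n + 1)) ≤ n * g (1 / 2) := by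
  refine hg.sum_range_le_mul_apply_half (fun k hk => ?_) (fun k hk => ?_)
  · exact_mod_cast natCast_div_mem_Icc (Nat.succ_le_succ hk.le)
  · rw [Nat.cast_sub (by omega), Nat.cast_sub (by omega)]
    field_simp
    ring

lemma ConcaveOn.add_two_mul_gridSum_le (hg : ConcaveOn ℝ (Set.Icc 0 1) g) {n : ℕ}
    (hn : 0 < n) : (n + 2) * gridSum g n ≤ (n + 1) * gridSum g (n + 1) := by
  have hn' : (n : ℝ) ≠ 0 := Nat.cast_ne_zero.2 hn.ne'
  have hstep : ∀ k ∈ range n,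
      ((k : ℝ) + 1) * g (k / n) + ((n : ℝ) - k) * g ((k + 1 : ℕ) / n) ≤
        (n + 1) * g ((k + 1) / (n + 1)) := by
    intro k hk
    have hk := mem_range.1 hk
    have h := hg.mul_add_mul_le (natCast_div_mem_Icc hk.le) (natCast_div_mem_Icc hk)
      (a := (k : ℝ) + 1) (b := (n : ℝ) - k) (by positivity)
      (sub_nonneg.2 (by exact_mod_cast hk.le)) (by ring_nf; positivity)
    rwa [show (k : ℝ) + 1 + (n - k) = n + 1 by ring,
      show ((k + 1) * (k / n) + (n - k) * ((k + 1 : ℕ) / n)) / (n + 1) =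
          ((k : ℝ) + 1) / (n + 1) by push_cast; field_simp; ring] at h
  have hsum := sum_le_sum hstep
  have hreindex := sum_range_succ_mul_add_sub_mul (fun k => g ((k : ℝ) / n)) n
  simp only [Nat.cast_zero, zero_div, div_self hn'] at hreindex
  rw [hreindex, ← mul_sum] at hsum
  rw [gridSum_succ_eq, gridSum]
  linear_combination hsum

lemma ConcaveOn.sub_one_mul_gridSum_succ_add_le (hg : ConcaveOn ℝ (Set.Icc 0 1) g) {n : ℕ}
    (hn : 0 < n) : (n - 1) * gridSum g (n + 1) + g 0 + g 1 ≤ n * gridSum g n := by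
  have hn' : (0 : ℝ) < n := Nat.cast_pos.2 hn
  have hstep : ∀ k ∈ range (n + 1),
      ((n : ℝ) - k) * g (k / (n + 1 : ℕ)) + k * g ((k + 1 : ℕ) / (n + 1 : ℕ)) ≤
        n * g (k / n) := by
    intro k hk
    have hk := Nat.lt_succ_iff.1 (mem_range.1 hk)
    have h := hg.mul_add_mul_le (natCast_div_mem_Icc (hk.trans n.le_succ))
      (natCast_div_mem_Icc (Nat.succ_le_succ hk)) (a := (n : ℝ) - k) (b := k)
      (sub_nonneg.2 (by exact_mod_cast hk)) (by positivity) (by ring_nf; exact hn')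
    rwa [show (n : ℝ) - k + k = n by ring,
      show ((n - k) * (k / (n + 1 : ℕ)) + k * ((k + 1 : ℕ) / (n + 1 : ℕ))) / n =
          (k : ℝ) / n by push_cast; field_simp; ring] at h
  have hsum := sum_le_sum hstep
  have hreindex := sum_range_sub_mul_add_mul_succ (fun k => g ((k : ℝ) / (n + 1 : ℕ))) n
  simp only [Nat.cast_zero, zero_div,
    div_self (a := ((n + 1 : ℕ) : ℝ)) (by positivity)] at hreindex
  rw [hreindex, ← mul_sum] at hsum
  exact hsum

lemma ConcaveOn.succ_mul_gridSum_le (hg : ConcaveOn ℝ (Set.Icc 0 1) g) {n : ℕ}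
    (hn : 0 < n) : (n + 1) * gridSum g n ≤ n * gridSum g (n + 1) + g (1 / 2) := by
  have hmono := mul_le_mul_of_nonneg_left (hg.add_two_mul_gridSum_le hn) n.cast_nonneg
  have hjensen := hg.gridSum_le_mul_apply_half hn
  refine le_of_mul_le_mul_left ?_ (by positivity : (0 : ℝ) < n + 1)
  linear_combination hmono + hjensen

lemma ConcaveOn.mul_gridSum_succ_add_le (hg : ConcaveOn ℝ (Set.Icc 0 1) g) {n : ℕ}
    (hn : 0 < n) : n * gridSum g (n + 1) + g 0 + g 1 ≤ (n + 1) * gridSum g n + g (1 / 2) := by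
  have hmono := mul_le_mul_of_nonneg_left (hg.sub_one_mul_gridSum_succ_add_le hn)
    (by positivity : (0 : ℝ) ≤ n + 1)
  have hjensen := hg.sum_range_succ_div_succ_le n
  rw [gridSum_succ_eq] at hmono ⊢
  refine le_of_mul_le_mul_left ?_ (Nat.cast_pos.2 hn : (0 : ℝ) < n)
  linear_combination hmono + hjensen

end Concave

section Symmetrization

variable (f : ℝ → ℝ) {n : ℕ}

lemma gridSum_symmetrization (hn : 0 < n) : gridSum (symmetrization f) n = gridSum f n := by
  have hreflect := sum_range_comp_one_sub f (p := fun k : ℕ => (k : ℝ) / n) (m := n + 1)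
    fun k hk => by
      simp only [Nat.add_sub_cancel]
      exact natCast_sub_div_eq_one_sub (Nat.lt_succ_iff.1 hk) hn
  simp only [gridSum, symmetrization, ← sum_div, sum_add_distrib, hreflect]
  ring

lemma gridSum_bounds_of_concaveOn (hg : ConcaveOn ℝ (Set.Icc 0 1) (symmetrization f))
    (hn : 0 < n) :
    (n + 1) * gridSum f n ≤ n * gridSum f (n + 1) + f (1 / 2) ∧
      n * gridSum f (n + 1) + f 0 + f 1 ≤ (n + 1) * gridSum f n + f (1 / 2) := by
  have hA := hg.succ_mul_gridSum_le hn
  have hB := hg.mul_gridSum_succ_add_le hn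
  rw [gridSum_symmetrization f hn, gridSum_symmetrization f n.succ_pos] at hA hB
  simp only [symmetrization] at hA hB
  norm_num at hA hB
  constructor <;> linarith

lemma gridSum_bounds_of_convexOn (hg : ConvexOn ℝ (Set.Icc 0 1) (symmetrization f))
    (hn : 0 < n) :
    n * gridSum f (n + 1) + f (1 / 2) ≤ (n + 1) * gridSum f n ∧
      (n + 1) * gridSum f n + f (1 / 2) ≤ n * gridSum f (n + 1) + f 0 + f 1 := by
  have hneg : symmetrization (fun x => -f x) = -symmetrization f := by
    funext x
    simp only [symmetrization, Pi.neg_apply]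
    ring
  have h := gridSum_bounds_of_concaveOn (fun x => -f x) (hneg ▸ hg.neg) hn
  simp only [gridSum, sum_neg_distrib] at h ⊢
  constructor <;> linarith [h.1, h.2]

end Symmetrization

section Riemann

variable (f : ℝ → ℝ) {n : ℕ}

lemma riemannL_eq_gridSum (hn : 0 < n) : riemannL f n = (gridSum f n - f 1) / n := by
  rw [riemannL, gridSum, sum_range_succ, div_self (Nat.cast_ne_zero.2 hn.ne')]
  ring

lemma riemannR_eq_gridSum : riemannR f n = (gridSum f n - f 0) / n := by
  rw [riemannR, gridSum, range_eq_Ico, sum_eq_sum_Ico_succ_bot (Nat.succ_pos n), zero_add,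
    Nat.succ_eq_add_one, Ico_add_one_right_eq_Icc]
  simp only [Nat.cast_zero, zero_div]
  ring

lemma riemannL_succ_le_iff (hn : 0 < n) :
    riemannL f (n + 1) ≤ riemannL f n ↔
      n * gridSum f (n + 1) + f 1 ≤ (n + 1) * gridSum f n := by
  have hn' : (0 : ℝ) < n := Nat.cast_pos.2 hn
  rw [riemannL_eq_gridSum f hn, riemannL_eq_gridSum f n.succ_pos, Nat.cast_succ,
    div_le_div_iff₀ (by positivity) hn']
  constructor <;> intro h <;> linarith

lemma riemannL_le_succ_iff (hn : 0 < n) :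
    riemannL f n ≤ riemannL f (n + 1) ↔
      (n + 1) * gridSum f n ≤ n * gridSum f (n + 1) + f 1 := by
  have hn' : (0 : ℝ) < n := Nat.cast_pos.2 hn
  rw [riemannL_eq_gridSum f hn, riemannL_eq_gridSum f n.succ_pos, Nat.cast_succ,
    div_le_div_iff₀ hn' (by positivity)]
  constructor <;> intro h <;> linarith

lemma riemannR_succ_le_iff (hn : 0 < n) :
    riemannR f (n + 1) ≤ riemannR f n ↔
      n * gridSum f (n + 1) + f 0 ≤ (n + 1) * gridSum f n := by
  have hn' : (0 : ℝ) < n := Nat.cast_pos.2 hn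
  rw [riemannR_eq_gridSum, riemannR_eq_gridSum, Nat.cast_succ,
    div_le_div_iff₀ (by positivity) hn']
  constructor <;> intro h <;> linarith

lemma riemannR_le_succ_iff (hn : 0 < n) :
    riemannR f n ≤ riemannR f (n + 1) ↔
      (n + 1) * gridSum f n ≤ n * gridSum f (n + 1) + f 0 := by
  have hn' : (0 : ℝ) < n := Nat.cast_pos.2 hn
  rw [riemannR_eq_gridSum, riemannR_eq_gridSum, Nat.cast_succ,
    div_le_div_iff₀ hn' (by positivity)]
  constructor <;> intro h <;> linarith

end Riemann

theorem stmt8 (f : ℝ → ℝ) :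
    ((ConcaveOn ℝ (Set.Icc (0:ℝ) 1) (symmetrization f) ∧ f (1 / 2) ≤ f 0) →
      (∀ n : ℕ, 1 ≤ n → riemannL f (n + 1) ≤ riemannL f n) ∧
      (∀ n : ℕ, 1 ≤ n → riemannR f n ≤ riemannR f (n + 1))) ∧
    ((ConcaveOn ℝ (Set.Icc (0:ℝ) 1) (symmetrization f) ∧ f (1 / 2) ≤ f 1) →
      (∀ n : ℕ, 1 ≤ n → riemannL f n ≤ riemannL f (n + 1)) ∧
      (∀ n : ℕ, 1 ≤ n → riemannR f (n + 1) ≤ riemannR f n)) ∧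
    ((ConvexOn ℝ (Set.Icc (0:ℝ) 1) (symmetrization f) ∧ f 1 ≤ f (1 / 2)) →
      (∀ n : ℕ, 1 ≤ n → riemannL f (n + 1) ≤ riemannL f n) ∧
      (∀ n : ℕ, 1 ≤ n → riemannR f n ≤ riemannR f (n + 1))) ∧
    ((ConvexOn ℝ (Set.Icc (0:ℝ) 1) (symmetrization f) ∧ f 0 ≤ f (1 / 2)) →
      (∀ n : ℕ, 1 ≤ n → riemannL f n ≤ riemannL f (n + 1)) ∧
      (∀ n : ℕ, 1 ≤ n → riemannR f (n + 1) ≤ riemannR f n)) := by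
  refine ⟨fun ⟨hg, h⟩ => ⟨fun n hn => ?_, fun n hn => ?_⟩,
    fun ⟨hg, h⟩ => ⟨fun n hn => ?_, fun n hn => ?_⟩,
    fun ⟨hg, h⟩ => ⟨fun n hn => ?_, fun n hn => ?_⟩,
    fun ⟨hg, h⟩ => ⟨fun n hn => ?_, fun n hn => ?_⟩⟩
  · exact (riemannL_succ_le_iff f hn).2 (by linarith [(gridSum_bounds_of_concaveOn f hg hn).2])
  · exact (riemannR_le_succ_iff f hn).2 (by linarith [(gridSum_bounds_of_concaveOn f hg hn).1])
  · exact (riemannL_le_succ_iff f hn).2 (by linarith [(gridSum_bounds_of_concaveOn f hg hn).1])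
  · exact (riemannR_succ_le_iff f hn).2 (by linarith [(gridSum_bounds_of_concaveOn f hg hn).2])
  · exact (riemannL_succ_le_iff f hn).2 (by linarith [(gridSum_bounds_of_convexOn f hg hn).1])
  · exact (riemannR_le_succ_iff f hn).2 (by linarith [(gridSum_bounds_of_convexOn f hg hn).2])
  · exact (riemannL_le_succ_iff f hn).2 (by linarith [(gridSum_bounds_of_convexOn f hg hn).2])
  · exact (riemannR_succ_le_iff f hn).2 (by linarith [(gridSum_bounds_of_convexOn f hg hn).1])
end

section
/- Let p : [0,1] → ℝ be a polynomial of degree at most 3. Then: (1) L_n(p) is increasing in n if and only if p(0) ≤ min{p(1), p(1/2)}; (2) L_n(p) is decreasing in n if and only if p(0) ≥ max{p(1), p(1/2)}; (3) R_n(p) is increasing in n if and only if p(1) ≤ min{p(0), p(1/2)}; (4) R_n(p) is decreasing in n if and only if p(1) ≥ max{p(0), p(1/2)}. -/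
open Finset

/-!
For a cubic `p = a + b x + c x² + d x³`, Faulhaber's formulas for `∑ k^i` (`i ≤ 3`) give the
exact expansion `L_n(p) = ∫₀¹ p - (p(1) - p(0))/(2n) + (p'(1) - p'(0))/(12n²)`. Hence, with
`u = p(1) - p(0)` and `v = p(1/2) - p(0)`,
`L_{n+1}(p) - L_n(p) = (u (3n+2)(n-1) + 4v (2n+1)) / (6n²(n+1)²)`,
which is nonnegative for every `n ≥ 1` iff `v ≥ 0` (take `n = 1`) and `u ≥ 0` (let `n → ∞`).
Decreasing left sums are increasing left sums of `-p`, and `R_n(f) = L_n(x ↦ f(1 - x))` turns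
right sums of `p` into left sums of `p(1 - X)`.
-/

open Polynomial

lemma riemannL_neg (f : ℝ → ℝ) (n : ℕ) : riemannL (fun x => -f x) n = -riemannL f n := by
  simp only [riemannL, sum_neg_distrib, mul_neg]

lemma riemannR_eq_riemannL_reflect (f : ℝ → ℝ) (n : ℕ) :
    riemannR f n = riemannL (fun x => f (1 - x)) n := by
  unfold riemannR riemannL
  congr 1
  refine sum_nbij' (n - ·) (n - ·) ?_ ?_ ?_ ?_ ?_ <;> intro k hk <;>
    simp only [mem_Icc, mem_range] at hk ⊢ <;> try omega
  have hn : (n : ℝ) ≠ 0 := by exact_mod_cast (by omega : n ≠ 0)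
  rw [Nat.cast_sub hk.2, sub_div, div_self hn, sub_sub_cancel]

lemma sum_range_cast (n : ℕ) : ∑ k ∈ range n, (k : ℝ) = n * (n - 1) / 2 := by
  induction n with
  | zero => simp
  | succ m ih => rw [sum_range_succ, ih]; push_cast; ring

lemma sum_range_cast_sq (n : ℕ) :
    ∑ k ∈ range n, (k : ℝ) ^ 2 = n * (n - 1) * (2 * n - 1) / 6 := by
  induction n with
  | zero => simp
  | succ m ih => rw [sum_range_succ, ih]; push_cast; ring

lemma sum_range_cast_cube (n : ℕ) : ∑ k ∈ range n, (k : ℝ) ^ 3 = n ^ 2 * (n - 1) ^ 2 / 4 := by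
  induction n with
  | zero => simp
  | succ m ih => rw [sum_range_succ, ih]; push_cast; ring

lemma riemannL_cubic (a b c d : ℝ) {n : ℕ} (hn : n ≠ 0) :
    riemannL (fun x => a + b * x + c * x ^ 2 + d * x ^ 3) n =
      a + b * (n - 1) / (2 * n) + c * (n - 1) * (2 * n - 1) / (6 * n ^ 2)
        + d * (n - 1) ^ 2 / (4 * n ^ 2) := by
  have hn : (n : ℝ) ≠ 0 := by positivity
  simp only [riemannL, sum_add_distrib, div_pow, mul_div, ← sum_div, ← mul_sum, sum_const,
    card_range, nsmul_eq_mul, sum_range_cast, sum_range_cast_sq, sum_range_cast_cube]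
  field_simp

lemma eval_eq_of_natDegree_le_three {R : Type*} [Semiring R] {p : R[X]} (hp : p.natDegree ≤ 3)
    (x : R) : p.eval x = p.coeff 0 + p.coeff 1 * x + p.coeff 2 * x ^ 2 + p.coeff 3 * x ^ 3 := by
  rw [eval_eq_sum_range' (Nat.lt_succ_of_le hp)]
  simp [sum_range_succ]

lemma riemannL_succ_sub_of_natDegree_le_three {p : ℝ[X]} (hp : p.natDegree ≤ 3) {n : ℕ}
    (hn : n ≠ 0) :
    riemannL (fun x => p.eval x) (n + 1) - riemannL (fun x => p.eval x) n =
      ((p.eval 1 - p.eval 0) * ((3 * n + 2) * (n - 1))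
          + 4 * (p.eval (1 / 2) - p.eval 0) * (2 * n + 1)) / (6 * n ^ 2 * (n + 1) ^ 2) := by
  simp only [eval_eq_of_natDegree_le_three hp]
  rw [riemannL_cubic _ _ _ _ hn, riemannL_cubic _ _ _ _ n.succ_ne_zero]
  have hn : (n : ℝ) ≠ 0 := by exact_mod_cast hn
  push_cast
  field_simp
  ring

lemma forall_quadratic_nonneg_iff (u v : ℝ) :
    (∀ n : ℕ, 1 ≤ n → 0 ≤ u * ((3 * n + 2) * (n - 1)) + 4 * v * (2 * n + 1)) ↔
      0 ≤ u ∧ 0 ≤ v := by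
  refine ⟨fun h => ⟨?_, ?_⟩, fun ⟨hu, hv⟩ n hn => ?_⟩
  · by_contra! hu
    -- for `n ≥ 2`, `n - 1 ≥ n / 2` and `2n + 1 ≤ 3n + 2` bound the value by
    -- `(3n + 2) (u n / 2 + 4 |v|)`, negative once `n > 8 |v| / (-u)`
    obtain ⟨n, hn⟩ := exists_nat_gt (max 2 (8 * |v| / -u))
    have h2 : (2 : ℝ) < n := lt_of_le_of_lt (le_max_left _ _) hn
    have hv : 8 * |v| < -u * n := by
      rw [← div_lt_iff₀' (neg_pos.mpr hu)]; exact lt_of_le_of_lt (le_max_right _ _) hn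
    have := h n (by exact_mod_cast (by linarith : (1 : ℝ) ≤ n))
    nlinarith [le_abs_self v, neg_abs_le v]
  · have := h 1 le_rfl
    norm_num at this
    linarith
  · have hn : (1 : ℝ) ≤ n := by exact_mod_cast hn
    have : 0 ≤ (3 * (n : ℝ) + 2) * (n - 1) := by nlinarith
    positivity

lemma natDegree_comp_one_sub_X_le {R : Type*} [Ring R] {p : R[X]} {d : ℕ}
    (hp : p.natDegree ≤ d) : (p.comp (1 - X)).natDegree ≤ d := by
  have h : (1 - X : R[X]).natDegree ≤ 1 := by compute_degree!
  simpa using natDegree_comp_le.trans (Nat.mul_le_mul hp h)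

section

variable {p : ℝ[X]}

theorem forall_riemannL_le_succ_iff (hp : p.natDegree ≤ 3) :
    (∀ n : ℕ, 1 ≤ n →
        riemannL (fun x => p.eval x) n ≤ riemannL (fun x => p.eval x) (n + 1)) ↔
      p.eval 0 ≤ min (p.eval 1) (p.eval (1 / 2)) := by
  have step (n : ℕ) (hn : 1 ≤ n) :
      riemannL (fun x => p.eval x) n ≤ riemannL (fun x => p.eval x) (n + 1) ↔
        0 ≤ (p.eval 1 - p.eval 0) * ((3 * n + 2) * (n - 1))
          + 4 * (p.eval (1 / 2) - p.eval 0) * (2 * n + 1) := by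
    rw [← sub_nonneg, riemannL_succ_sub_of_natDegree_le_three hp (by omega),
      le_div_iff₀ (by positivity), zero_mul]
  rw [forall₂_congr step, forall_quadratic_nonneg_iff, le_min_iff, sub_nonneg, sub_nonneg]

theorem forall_riemannL_succ_le_iff (hp : p.natDegree ≤ 3) :
    (∀ n : ℕ, 1 ≤ n →
        riemannL (fun x => p.eval x) (n + 1) ≤ riemannL (fun x => p.eval x) n) ↔
      max (p.eval 1) (p.eval (1 / 2)) ≤ p.eval 0 := by
  have h := forall_riemannL_le_succ_iff (p := -p) (by rwa [natDegree_neg])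
  simp only [eval_neg, riemannL_neg, neg_le_neg_iff, le_min_iff] at h
  rw [h, max_le_iff]

theorem forall_riemannR_le_succ_iff (hp : p.natDegree ≤ 3) :
    (∀ n : ℕ, 1 ≤ n →
        riemannR (fun x => p.eval x) n ≤ riemannR (fun x => p.eval x) (n + 1)) ↔
      p.eval 1 ≤ min (p.eval 0) (p.eval (1 / 2)) := by
  have h := forall_riemannL_le_succ_iff (natDegree_comp_one_sub_X_le hp)
  norm_num [eval_comp] at h
  simpa only [riemannR_eq_riemannL_reflect, le_min_iff, max_le_iff] using h

theorem forall_riemannR_succ_le_iff (hp : p.natDegree ≤ 3) :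
    (∀ n : ℕ, 1 ≤ n →
        riemannR (fun x => p.eval x) (n + 1) ≤ riemannR (fun x => p.eval x) n) ↔
      max (p.eval 0) (p.eval (1 / 2)) ≤ p.eval 1 := by
  have h := forall_riemannL_succ_le_iff (natDegree_comp_one_sub_X_le hp)
  norm_num [eval_comp] at h
  simpa only [riemannR_eq_riemannL_reflect, le_min_iff, max_le_iff] using h

end

theorem stmt11 (p : Polynomial ℝ) (hp : p.natDegree ≤ 3) :
    ((∀ n : ℕ, 1 ≤ n →
        riemannL (fun x => p.eval x) n ≤ riemannL (fun x => p.eval x) (n + 1)) ↔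
      p.eval 0 ≤ min (p.eval 1) (p.eval (1 / 2))) ∧
    ((∀ n : ℕ, 1 ≤ n →
        riemannL (fun x => p.eval x) (n + 1) ≤ riemannL (fun x => p.eval x) n) ↔
      max (p.eval 1) (p.eval (1 / 2)) ≤ p.eval 0) ∧
    ((∀ n : ℕ, 1 ≤ n →
        riemannR (fun x => p.eval x) n ≤ riemannR (fun x => p.eval x) (n + 1)) ↔
      p.eval 1 ≤ min (p.eval 0) (p.eval (1 / 2))) ∧
    ((∀ n : ℕ, 1 ≤ n →
        riemannR (fun x => p.eval x) (n + 1) ≤ riemannR (fun x => p.eval x) n) ↔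
      max (p.eval 0) (p.eval (1 / 2)) ≤ p.eval 1) :=
  ⟨forall_riemannL_le_succ_iff hp, forall_riemannL_succ_le_iff hp,
    forall_riemannR_le_succ_iff hp, forall_riemannR_succ_le_iff hp⟩
end
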